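/- Let 𝔤̃ be a finite-dimensional real Lie algebra with a nondegenerate symmetric bilinear form ⟨·,·⟩, with an orthogonal direct sum 𝔤̃ = 𝔤 ⊕ 𝔞 where 𝔤 is an ideal on which ⟨·,·⟩ restricts nondegenerately and 𝔞 is an abelian subalgebra, such that ad(a) is symmetric for every a ∈ 𝔞 (pseudo-Iwasawa condition); set φ_a := −ad(a). Let ∇ satisfy the Koszul identity 2⟨∇_x y, z⟩ = ⟨[x,y],z⟩ − ⟨[y,z],x⟩ + ⟨[z,x],y⟩, and define the curvature R(x,y) := ∇_x ∘ ∇_y − ∇_y ∘ ∇_x − ∇_{[x,y]} ∈ End(𝔤̃), where ∇_x denotes the endomorphism y ↦ ∇_x y. Then for all v, w ∈ 𝔤 and a, b ∈ 𝔞: R(v,a)w = −∇_{φ_a(v)} w and R(v,a)b = −φ_b(φ_a(v)). -/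

import Mathlib

/-! Since `𝔞` is abelian, `ad a` is `⟨·,·⟩`-symmetric and `𝔤 ⟂ 𝔞` with `𝔤` an ideal, the Koszul
formula gives `∇_a = 0` for `a ∈ 𝔞` and `∇_v b = φ_b(v)` for `v ∈ 𝔤`, `b ∈ 𝔞`. Hence
`R(v,a) = -∇_{⁅v,a⁆} = -∇_{φ_a(v)}`, and evaluating at `b ∈ 𝔞` uses `φ_a(v) ∈ 𝔤`. -/

section PseudoIwasawa

variable {L : Type*} [LieRing L] [LieAlgebra ℝ L] {B : LinearMap.BilinForm ℝ L}
  {G : LieIdeal ℝ L} {A : LieSubalgebra ℝ L} {nabla : L →ₗ[ℝ] L →ₗ[ℝ] L}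

def IsKoszul (B : LinearMap.BilinForm ℝ L) (nabla : L →ₗ[ℝ] L →ₗ[ℝ] L) : Prop :=
  ∀ x y z : L, 2 * B (nabla x y) z = B ⁅x, y⁆ z - B ⁅y, z⁆ x + B ⁅z, x⁆ y

theorem IsKoszul.apply_eq_of_forall (hB : B.Nondegenerate) (hK : IsKoszul B nabla) {x y u : L}
    (h : ∀ z, B ⁅x, y⁆ z - B ⁅y, z⁆ x + B ⁅z, x⁆ y = 2 * B u z) : nabla x y = u := by
  refine sub_eq_zero.mp (hB.1 _ fun z => ?_)
  have := hK x y z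
  simp only [map_sub, LinearMap.sub_apply]
  linarith [h z]

theorem bilin_lie_apply_comm (hBsymm : ∀ x y : L, B x y = B y x) {a : L}
    (hsymm : ∀ x y : L, B ⁅a, x⁆ y = B x ⁅a, y⁆) (x y : L) : B ⁅a, x⁆ y = B ⁅a, y⁆ x := by
  rw [hsymm, hBsymm]

theorem nabla_abelian_ideal_eq_zero (hB : B.Nondegenerate) (hK : IsKoszul B nabla)
    (hBsymm : ∀ x y : L, B x y = B y x) (horth : ∀ v ∈ G, ∀ a ∈ A, B v a = 0)
    (hIwasawa : ∀ a ∈ A, ∀ x y : L, B ⁅a, x⁆ y = B x ⁅a, y⁆)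
    {a v : L} (ha : a ∈ A) (hv : v ∈ G) : nabla a v = 0 := by
  refine hK.apply_eq_of_forall hB fun z => ?_
  have hvz : B ⁅v, z⁆ a = 0 := horth _ (lie_mem_left ℝ L G v z hv) a ha
  rw [← lie_skew z a, map_neg, LinearMap.neg_apply,
    bilin_lie_apply_comm hBsymm (hIwasawa a ha) z v, hvz]
  simp

theorem nabla_abelian_abelian_eq_zero (hB : B.Nondegenerate) (hK : IsKoszul B nabla)
    (hIwasawa : ∀ a ∈ A, ∀ x y : L, B ⁅a, x⁆ y = B x ⁅a, y⁆)
    (hAabelian : ∀ a ∈ A, ∀ b ∈ A, ⁅a, b⁆ = 0) {a b : L} (ha : a ∈ A) (hb : b ∈ A) :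
    nabla a b = 0 := by
  refine hK.apply_eq_of_forall hB fun z => ?_
  rw [hAabelian a ha b hb, ← lie_skew z a, map_neg, LinearMap.neg_apply, hIwasawa a ha z b,
    hIwasawa b hb z a, hAabelian a ha b hb, hAabelian b hb a ha]
  simp

theorem nabla_ideal_abelian_eq (hB : B.Nondegenerate) (hK : IsKoszul B nabla)
    (hBsymm : ∀ x y : L, B x y = B y x) (horth : ∀ v ∈ G, ∀ a ∈ A, B v a = 0)
    (hIwasawa : ∀ a ∈ A, ∀ x y : L, B ⁅a, x⁆ y = B x ⁅a, y⁆)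
    {v b : L} (hv : v ∈ G) (hb : b ∈ A) : nabla v b = -⁅b, v⁆ := by
  refine hK.apply_eq_of_forall hB fun z => ?_
  have hzv : B ⁅z, v⁆ b = 0 := horth _ (G.lie_mem hv) b hb
  rw [← lie_skew v b, bilin_lie_apply_comm hBsymm (hIwasawa b hb) z v, hzv]
  simp only [map_neg, LinearMap.neg_apply]
  ring

theorem nabla_abelian_eq_zero (hB : B.Nondegenerate) (hK : IsKoszul B nabla)
    (hBsymm : ∀ x y : L, B x y = B y x) (horth : ∀ v ∈ G, ∀ a ∈ A, B v a = 0)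
    (hIwasawa : ∀ a ∈ A, ∀ x y : L, B ⁅a, x⁆ y = B x ⁅a, y⁆)
    (hAabelian : ∀ a ∈ A, ∀ b ∈ A, ⁅a, b⁆ = 0)
    (hsup : G.toSubmodule ⊔ A.toSubmodule = ⊤) {a : L} (ha : a ∈ A) : nabla a = 0 := by
  ext x
  obtain ⟨v, hv, b, hb, rfl⟩ := Submodule.mem_sup.mp (hsup ▸ Submodule.mem_top (x := x))
  rw [map_add, nabla_abelian_ideal_eq_zero hB hK hBsymm horth hIwasawa ha hv,
    nabla_abelian_abelian_eq_zero hB hK hIwasawa hAabelian ha hb, add_zero, LinearMap.zero_apply]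

end PseudoIwasawa

theorem stmt_7 (L : Type*) [LieRing L] [LieAlgebra ℝ L]
    (B : LinearMap.BilinForm ℝ L) (hBsymm : ∀ x y : L, B x y = B y x)
    (hBnondeg : B.Nondegenerate)
    (G : LieIdeal ℝ L) (A : LieSubalgebra ℝ L)
    (hAabelian : ∀ a ∈ A, ∀ b ∈ A, ⁅a, b⁆ = 0)
    (hsup : G.toSubmodule ⊔ A.toSubmodule = ⊤)
    (horth : ∀ v ∈ G, ∀ a ∈ A, B v a = 0)
    (hIwasawa : ∀ a ∈ A, ∀ x y : L, B ⁅a, x⁆ y = B x ⁅a, y⁆)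
    (nabla : L →ₗ[ℝ] L →ₗ[ℝ] L)
    (hKoszul : ∀ x y z : L,
      2 * B (nabla x y) z = B ⁅x, y⁆ z - B ⁅y, z⁆ x + B ⁅z, x⁆ y)
    (R : L → L → L → L)
    (hR : ∀ x y z : L, R x y z = nabla x (nabla y z) - nabla y (nabla x z) - nabla ⁅x, y⁆ z) :
    (∀ v ∈ G, ∀ a ∈ A, ∀ w ∈ G, R v a w = -nabla (-⁅a, v⁆) w) ∧
    (∀ v ∈ G, ∀ a ∈ A, ∀ b ∈ A, R v a b = -(-⁅b, -⁅a, v⁆⁆)) := by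
  have hR_abelian : ∀ v z : L, ∀ a ∈ A, R v a z = nabla ⁅a, v⁆ z := by
    intro v z a ha
    rw [hR, nabla_abelian_eq_zero hBnondeg hKoszul hBsymm horth hIwasawa hAabelian hsup ha,
      ← lie_skew v a, map_neg, LinearMap.neg_apply]
    simp only [LinearMap.zero_apply, map_zero, sub_zero, zero_sub, neg_neg]
  refine ⟨fun v _ a ha w _ => ?_, fun v hv a ha b hb => ?_⟩
  · rw [hR_abelian v w a ha, map_neg, LinearMap.neg_apply, neg_neg]
  · rw [hR_abelian v b a ha,
      nabla_ideal_abelian_eq hBnondeg hKoszul hBsymm horth hIwasawa (G.lie_mem hv) hb]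
    simp
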